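/- Fix an integer N ≥ 1 and set η_n = (N+2)n²/N² for 1 ≤ n ≤ N−1. Then the characteristic polynomial of the N×N matrix B defined below equals ∏_{l=0}^{N−1}(X − β_l), where β_l = (N + 2 − (2N² − 3N − 6)l + 2(N+2)l²)/N², i.e. the eigenvalues of B are precisely β₀, …, β_{N−1}. (This is the spectrum of B for the N-truncated unbounded whole-plane SLE_κ with κ = 2(N+2)/N².) -/

import Mathlib

open Polynomial Finset

/-- Residue matrix at `ξ = 1` (unbounded whole-plane LLE, `q = 2`). -/
noncomputable def unboundedB (N : ℕ) (η : ℕ → ℝ) : Matrix (Fin N) (Fin N) ℝ :=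
  Matrix.of fun i j =>
    if (i : ℕ) = 0 then
      (if (j : ℕ) = 0 then 3 else if (j : ℕ) = 1 then -2 else 0)
    else if (j : ℕ) + 1 = (i : ℕ) then (η i - i - 2) / 2
    else if (j : ℕ) = (i : ℕ) then 3 - η i
    else if (j : ℕ) = (i : ℕ) + 1 then (η i + i - 2) / 2
    else 0

def uuP {R : Type*} [CommRing R] (l : ℕ) (y : R) : R :=
  ∏ i ∈ Finset.range l, (y - (i : R) ^ 2)

lemma uuP_succ {R : Type*} [CommRing R] (l : ℕ) (y : R) :
    uuP (l + 1) y = uuP l y * (y - (l : R) ^ 2) := by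
  simp [uuP, Finset.prod_range_succ]

lemma uuP_map {R S : Type*} [CommRing R] [CommRing S] (φ : R →+* S) (l : ℕ) (y : R) :
    φ (uuP l y) = uuP l (φ y) := by
  simp [uuP, map_prod]

lemma starPlus {R : Type*} [CommRing R] (l : ℕ) (x : R) :
    x * (x - (l : R) + 1) * uuP l ((x + 1) ^ 2) = (x + 1) * (x + (l : R)) * uuP l (x ^ 2) := by
  induction l with
  | zero => simp [uuP]; ring
  | succ m ih =>
    rw [uuP_succ, uuP_succ]
    push_cast
    linear_combination ((x - (m : R)) * (x + 1 + (m : R))) * ih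

lemma starMinus {R : Type*} [CommRing R] (l : ℕ) (x : R) :
    x * (x + (l : R) - 1) * uuP l ((x - 1) ^ 2) = (x - 1) * (x - (l : R)) * uuP l (x ^ 2) := by
  have h := starPlus l (-x)
  have h1 : ((-x) + 1) ^ 2 = (x - 1) ^ 2 := by ring
  have h2 : (-x) ^ 2 = x ^ 2 := by ring
  rw [h1, h2] at h
  linear_combination h

/-- The key three-term identity (in fourfold-scaled form), away from the bad points. -/
lemma keyE4_of_ne {R : Type*} [CommRing R] [IsDomain R] (κ x : R) (l : ℕ)
    (hx : x ≠ 0) (h1 : x - (l : R) + 1 ≠ 0) (h2 : x + (l : R) - 1 ≠ 0) :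
    (κ * (x - 1) ^ 2 + 2 * (x - 1) - 4) * uuP l ((x - 1) ^ 2)
      + (12 - 2 * κ * x ^ 2) * uuP l (x ^ 2)
      + (κ * (x + 1) ^ 2 - 2 * (x + 1) - 4) * uuP l ((x + 1) ^ 2)
    = (2 * κ * ((l : R) + 1) * (2 * (l : R) + 1) - 8 * (l : R)) * uuP l (x ^ 2)
      + 2 * (l : R) * (2 * (l : R) - 1) * (κ * (l : R) ^ 2 - 2 * ((l : R) + 2))
          * uuP (l - 1) (x ^ 2) := by
  cases l with
  | zero => simp [uuP]; ring
  | succ m =>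
    have hm : ((m + 1 : ℕ) : R) = (m : R) + 1 := by push_cast; ring
    rw [hm]
    rw [hm] at h1 h2
    have hM : x * (x - (m : R)) * (x + (m : R)) ≠ 0 := by
      apply mul_ne_zero (mul_ne_zero hx _) _
      · intro h; apply h1; linear_combination h
      · intro h; apply h2; linear_combination h
    apply mul_left_cancel₀ hM
    have sp := starPlus (m + 1) x
    have sm := starMinus (m + 1) x
    rw [hm] at sp sm
    have hu : uuP (m + 1) (x ^ 2) = uuP m (x ^ 2) * (x ^ 2 - (m : R) ^ 2) := uuP_succ m _
    have hs : (m + 1) - 1 = m := rfl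
    rw [hs]
    linear_combination
      ((κ * (x - 1) ^ 2 + 2 * (x - 1) - 4) * (x - (m : R))) * sm
      + ((κ * (x + 1) ^ 2 - 2 * (x + 1) - 4) * (x + (m : R))) * sp
      + (2 * (m : R) + 2) * (2 * (m : R) + 1) * (κ * ((m : R) + 1) ^ 2 - 2 * ((m : R) + 3)) * x * hu


lemma X_add_C_ne_zero' (a : ℝ) : (X : ℝ[X]) + C a ≠ 0 := by
  intro h
  have := congrArg (fun p => Polynomial.coeff p 1) h
  simp at this

/-- The key identity, unconditionally over `ℝ`. -/
lemma keyE4 (κ x : ℝ) (l : ℕ) :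
    (κ * (x - 1) ^ 2 + 2 * (x - 1) - 4) * uuP l ((x - 1) ^ 2)
      + (12 - 2 * κ * x ^ 2) * uuP l (x ^ 2)
      + (κ * (x + 1) ^ 2 - 2 * (x + 1) - 4) * uuP l ((x + 1) ^ 2)
    = (2 * κ * ((l : ℝ) + 1) * (2 * (l : ℝ) + 1) - 8 * (l : ℝ)) * uuP l (x ^ 2)
      + 2 * (l : ℝ) * (2 * (l : ℝ) - 1) * (κ * (l : ℝ) ^ 2 - 2 * ((l : ℝ) + 2))
          * uuP (l - 1) (x ^ 2) := by
  have h1 : (X : ℝ[X]) + C x - (l : ℝ[X]) + 1 = X + C (x - l + 1) := by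
    push_cast [Polynomial.C_sub, Polynomial.C_add]
    simp [Polynomial.C_eq_natCast]
    ring
  have h2 : (X : ℝ[X]) + C x + (l : ℝ[X]) - 1 = X + C (x + l - 1) := by
    push_cast [Polynomial.C_sub, Polynomial.C_add]
    simp [Polynomial.C_eq_natCast]
    ring
  have key := keyE4_of_ne (R := ℝ[X]) (C κ) (X + C x) l
    (X_add_C_ne_zero' x) (h1 ▸ X_add_C_ne_zero' _) (h2 ▸ X_add_C_ne_zero' _)
  have := congrArg (fun p => Polynomial.eval 0 p) key
  simpa [uuP_map (Polynomial.evalRingHom (0:ℝ)), uuP, Polynomial.eval_prod] using this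


lemma charpoly_eq_of_conj {n : ℕ} (P B T : Matrix (Fin n) (Fin n) ℝ)
    (hdet : P.det ≠ 0) (h : P * B = T * P) : B.charpoly = T.charpoly := by
  have key : P.map C * Matrix.charmatrix B = Matrix.charmatrix T * P.map C := by
    rw [Matrix.charmatrix, Matrix.charmatrix, Matrix.mul_sub, Matrix.sub_mul]
    congr 1
    · exact (Matrix.scalar_commute (X : ℝ[X]) (fun r => Commute.all _ _) (P.map C)).symm
    · rw [RingHom.mapMatrix_apply, RingHom.mapMatrix_apply,
        ← Matrix.map_mul, ← Matrix.map_mul, h]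
  have hd := congrArg Matrix.det key
  rw [Matrix.det_mul, Matrix.det_mul] at hd
  have hmap : (P.map C).det = C P.det := by
    rw [RingHom.map_det, RingHom.mapMatrix_apply]
  rw [hmap] at hd
  have hC : (C P.det : ℝ[X]) ≠ 0 := by simpa using hdet
  unfold Matrix.charpoly
  apply mul_left_cancel₀ hC
  rw [hd]; ring


noncomputable def wt (j : ℕ) : ℝ := if j = 0 then 1/2 else 1

noncomputable def Pmat (N : ℕ) : Matrix (Fin N) (Fin N) ℝ :=
  Matrix.of fun l j => wt j * uuP l (((j : ℕ) : ℝ) ^ 2)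

noncomputable def bbeta (N l : ℕ) : ℝ :=
  ((N : ℝ) + 2 - (2 * (N : ℝ) ^ 2 - 3 * (N : ℝ) - 6) * (l : ℝ)
    + 2 * ((N : ℝ) + 2) * (l : ℝ) ^ 2) / (N : ℝ) ^ 2

noncomputable def aaa (N l : ℕ) : ℝ :=
  (l : ℝ) * (2 * (l : ℝ) - 1) * (((N : ℝ) + 2) * (l : ℝ) ^ 2 / (N : ℝ) ^ 2 - ((l : ℝ) + 2))

noncomputable def Tmat (N : ℕ) : Matrix (Fin N) (Fin N) ℝ :=
  Matrix.of fun l k =>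
    if (k : ℕ) = (l : ℕ) then bbeta N l else if (k : ℕ) + 1 = (l : ℕ) then aaa N l else 0

lemma Pmat_det_ne_zero (N : ℕ) : (Pmat N).det ≠ 0 := by
  have htri : (Pmat N).BlockTriangular id := by
    intro l j hlj
    simp only [id] at hlj
    have hj : (j : ℕ) ∈ Finset.range (l : ℕ) := Finset.mem_range.2 hlj
    simp only [Pmat, Matrix.of_apply, uuP]
    rw [Finset.prod_eq_zero hj (by simp)]
    ring
  rw [Matrix.det_of_upperTriangular htri]
  apply Finset.prod_ne_zero_iff.2
  intro l _
  simp only [Pmat, Matrix.of_apply]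
  apply mul_ne_zero
  · unfold wt; split <;> norm_num
  · unfold uuP
    apply Finset.prod_ne_zero_iff.2
    intro i hi
    have : (i : ℝ) ^ 2 < ((l : ℕ) : ℝ) ^ 2 := by
      have : (i : ℝ) < ((l : ℕ) : ℝ) := by exact_mod_cast Finset.mem_range.1 hi
      have h0 : (0 : ℝ) ≤ (i : ℝ) := Nat.cast_nonneg i
      nlinarith
    intro hc
    rw [sub_eq_zero] at hc
    linarith [hc]

lemma Tmat_charpoly (N : ℕ) :
    (Tmat N).charpoly = ∏ l : Fin N, (X - C (bbeta N (l : ℕ))) := by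
  have htri : (Tmat N).BlockTriangular OrderDual.toDual := by
    intro l k hlk
    have : (l : ℕ) < (k : ℕ) := hlk
    simp only [Tmat, Matrix.of_apply]
    rw [if_neg (by omega), if_neg (by omega)]
  unfold Matrix.charpoly
  rw [Matrix.det_of_lowerTriangular _ htri.charmatrix]
  apply Finset.prod_congr rfl
  intro l _
  rw [Matrix.charmatrix_apply_eq]
  congr 1
  simp [Tmat]


lemma tri_sum (N j : ℕ) (f : ℕ → ℝ)
    (h : ∀ i, i < N → i ≠ j - 1 → i ≠ j → i ≠ j + 1 → f i = 0) :
    ∑ i ∈ Finset.range N, f i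
      = (if 1 ≤ j ∧ j - 1 < N then f (j - 1) else 0)
      + (if j < N then f j else 0) + (if j + 1 < N then f (j + 1) else 0) := by
  have hsplit : ∀ i ∈ Finset.range N, f i
      = (if (1 ≤ j ∧ i = j - 1) then f i else 0) + (if i = j then f i else 0)
        + (if i = j + 1 then f i else 0) := by
    intro i hi
    have hiN : i < N := Finset.mem_range.1 hi
    by_cases h1 : 1 ≤ j ∧ i = j - 1
    · rw [if_pos h1, if_neg (by omega), if_neg (by omega)]; ring
    · by_cases h2 : i = j
      · rw [if_neg h1, if_pos h2, if_neg (by omega)]; ring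
      · by_cases h3 : i = j + 1
        · rw [if_neg h1, if_neg h2, if_pos h3]; ring
        · rw [if_neg h1, if_neg h2, if_neg h3]
          have hne : i ≠ j - 1 := by omega
          simpa using h i hiN hne h2 h3
  rw [Finset.sum_congr rfl hsplit, Finset.sum_add_distrib, Finset.sum_add_distrib]
  congr 1
  · congr 1
    · by_cases hj : 1 ≤ j
      · simp only [hj, true_and]
        rw [Finset.sum_ite_eq' (Finset.range N) (j - 1) f]
        simp [Finset.mem_range]
      · simp [hj]
    · rw [Finset.sum_ite_eq' (Finset.range N) j f]
      simp [Finset.mem_range]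
  · rw [Finset.sum_ite_eq' (Finset.range N) (j + 1) f]
    simp [Finset.mem_range]


lemma keyN (N l : ℕ) (x : ℝ) :
    ((((N : ℝ) + 2) * (x + 1) ^ 2 / (N : ℝ) ^ 2 - (x + 1) - 2) / 2) * uuP l ((x + 1) ^ 2)
      + (3 - ((N : ℝ) + 2) * x ^ 2 / (N : ℝ) ^ 2) * uuP l (x ^ 2)
      + ((((N : ℝ) + 2) * (x - 1) ^ 2 / (N : ℝ) ^ 2 + (x - 1) - 2) / 2) * uuP l ((x - 1) ^ 2)
    = (((N : ℝ) + 2) * ((l : ℝ) + 1) * (2 * (l : ℝ) + 1) / (N : ℝ) ^ 2 - 2 * (l : ℝ))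
          * uuP l (x ^ 2)
      + aaa N l * uuP (l - 1) (x ^ 2) := by
  have hk := keyE4 (2 * ((N : ℝ) + 2) / (N : ℝ) ^ 2) x l
  unfold aaa
  linear_combination hk / 4

lemma bbeta_eq (N l : ℕ) (hN : 1 ≤ N) :
    bbeta N l = ((N : ℝ) + 2) * ((l : ℝ) + 1) * (2 * (l : ℝ) + 1) / (N : ℝ) ^ 2 - 2 * (l : ℝ) := by
  have hN0 : (N : ℝ) ≠ 0 := by
    have : (0:ℝ) < N := by exact_mod_cast hN
    linarith
  unfold bbeta
  field_simp
  ring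


lemma PB_eq_TP (N : ℕ) (hN : 1 ≤ N) :
    Pmat N * unboundedB N (fun n => ((N : ℝ) + 2) * (n : ℝ) ^ 2 / (N : ℝ) ^ 2)
      = Tmat N * Pmat N := by
  classical
  set η : ℕ → ℝ := fun n => ((N : ℝ) + 2) * (n : ℝ) ^ 2 / (N : ℝ) ^ 2 with hη
  set pN : ℕ → ℕ → ℝ := fun l j => wt j * uuP l ((j : ℝ) ^ 2) with hpN
  set bN : ℕ → ℕ → ℝ := fun i j =>
    if i = 0 then (if j = 0 then 3 else if j = 1 then -2 else 0)
    else if j + 1 = i then (η i - i - 2) / 2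
    else if j = i then 3 - η i
    else if j = i + 1 then (η i + i - 2) / 2 else 0 with hbN
  set tN : ℕ → ℕ → ℝ := fun l k =>
    if k = l then bbeta N l else if k + 1 = l then aaa N l else 0 with htN
  ext l j
  rw [Matrix.mul_apply, Matrix.mul_apply]
  have hL : ∑ i : Fin N, Pmat N l i * unboundedB N η i j
      = ∑ i ∈ Finset.range N, (fun i => pN l i * bN i j) i :=
    Fin.sum_univ_eq_sum_range (fun i => pN (l : ℕ) i * bN i (j : ℕ)) N
  have hR : ∑ k : Fin N, Tmat N l k * Pmat N k j
      = ∑ k ∈ Finset.range N, (fun k => tN l k * pN k j) k :=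
    Fin.sum_univ_eq_sum_range (fun k => tN (l : ℕ) k * pN k (j : ℕ)) N
  rw [hL, hR]
  have hvanL : ∀ i, i < N → i ≠ (j : ℕ) - 1 → i ≠ (j : ℕ) → i ≠ (j : ℕ) + 1 →
      pN (l : ℕ) i * bN i (j : ℕ) = 0 := by
    intro i _ h1 h2 h3
    have hb : bN i (j : ℕ) = 0 := by
      simp only [hbN]
      split_ifs <;> first | rfl | (exfalso; omega)
    rw [hb, mul_zero]
  have hvanR : ∀ k, k < N → k ≠ (l : ℕ) - 1 → k ≠ (l : ℕ) → k ≠ (l : ℕ) + 1 →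
      tN (l : ℕ) k * pN k (j : ℕ) = 0 := by
    intro k _ h1 h2 h3
    have ht : tN (l : ℕ) k = 0 := by
      simp only [htN]
      split_ifs <;> first | rfl | (exfalso; omega)
    rw [ht, zero_mul]
  rw [tri_sum N (j : ℕ) _ hvanL, tri_sum N (l : ℕ) _ hvanR]
  -- simplify the T side
  have hl2 : (if (l : ℕ) < N then tN (l : ℕ) (l : ℕ) * pN (l : ℕ) (j : ℕ) else 0)
      = bbeta N l * pN (l : ℕ) (j : ℕ) := by
    rw [if_pos l.isLt]
    simp only [htN, if_pos rfl]
  have hl3 : (if (l : ℕ) + 1 < N then tN (l : ℕ) ((l : ℕ) + 1) * pN ((l : ℕ) + 1) (j : ℕ) else 0)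
      = 0 := by
    split_ifs with h
    · have : tN (l : ℕ) ((l : ℕ) + 1) = 0 := by
        simp only [htN]
        split_ifs <;> first | rfl | (exfalso; omega)
      rw [this, zero_mul]
    · rfl
  have hl1 : (if 1 ≤ (l : ℕ) ∧ (l : ℕ) - 1 < N then tN (l : ℕ) ((l : ℕ) - 1) * pN ((l : ℕ) - 1) (j : ℕ) else 0)
      = aaa N l * pN ((l : ℕ) - 1) (j : ℕ) := by
    by_cases h : 1 ≤ (l : ℕ)
    · rw [if_pos ⟨h, by omega⟩]
      have : tN (l : ℕ) ((l : ℕ) - 1) = aaa N l := by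
        simp only [htN]
        rw [if_neg (by omega), if_pos (by omega)]
      rw [this]
    · rw [if_neg (by omega)]
      have hl0 : (l : ℕ) = 0 := by omega
      rw [hl0]
      simp [aaa]
  rw [hl1, hl2, hl3, bbeta_eq N l hN, add_zero]
  rw [if_pos j.isLt]
  rcases Nat.eq_zero_or_pos (j : ℕ) with hj0 | hj1
  · -- column j = 0
    rw [hj0]
    rw [if_neg (by omega : ¬(1 ≤ 0 ∧ 0 - 1 < N))]
    have hb00 : bN 0 0 = (3:ℝ) := by simp [hbN]
    rw [hb00]
    by_cases h1N : (0:ℕ) + 1 < N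
    · rw [if_pos h1N]
      have hb10 : bN 1 0 = (η 1 - 1 - 2) / 2 := by
        simp only [hbN]; norm_num
      rw [hb10]
      have hk := keyN N (l : ℕ) (0 : ℝ)
      simp only [hpN, wt, hη]
      norm_num at hk ⊢
      linear_combination hk / 2
    · -- N = 1
      have hN1 : N = 1 := by omega
      have hl0 : (l : ℕ) = 0 := by have := l.isLt; omega
      rw [if_neg h1N, hl0]
      simp only [hpN, wt, aaa, uuP, hN1]
      norm_num
  · -- column j ≥ 1
    have hj0' : (j : ℕ) ≠ 0 := by omega
    rw [if_pos (show 1 ≤ (j:ℕ) ∧ (j:ℕ) - 1 < N by omega)]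
    have hbjj : bN (j : ℕ) (j : ℕ) = 3 - η (j : ℕ) := by
      simp only [hbN]; rw [if_neg hj0', if_neg (by omega)]; simp
    rw [hbjj]
    have hk := keyN N (l : ℕ) ((j : ℕ) : ℝ)
    have hsub : pN (l : ℕ) ((j:ℕ) - 1) * bN ((j:ℕ) - 1) (j:ℕ)
        = ((((N : ℝ) + 2) * (((j:ℕ):ℝ) - 1) ^ 2 / (N : ℝ) ^ 2 + (((j:ℕ):ℝ) - 1) - 2) / 2)
            * uuP (l : ℕ) ((((j:ℕ):ℝ) - 1) ^ 2) := by
      rcases eq_or_lt_of_le (show 1 ≤ (j:ℕ) from hj1) with hj1' | hj2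
      · -- j = 1
        rw [← hj1']
        have : bN 0 1 = (-2:ℝ) := by simp [hbN]
        rw [this]
        simp only [hpN, wt, hη]
        norm_num
        ring
      · -- j ≥ 2
        have hi0 : (j:ℕ) - 1 ≠ 0 := by omega
        have : bN ((j:ℕ) - 1) (j:ℕ) = (η ((j:ℕ) - 1) + (((j:ℕ) - 1 : ℕ) : ℝ) - 2) / 2 := by
          simp only [hbN]
          rw [if_neg hi0, if_neg (by omega), if_neg (by omega), if_pos (by omega)]
        rw [this]
        simp only [hpN, wt, hη]
        rw [if_neg hi0]
        have hc : (((j:ℕ) - 1 : ℕ) : ℝ) = ((j:ℕ) : ℝ) - 1 := by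
          push_cast [Nat.cast_sub hj1]; ring
        rw [hc]
        ring
    rw [hsub]
    by_cases hjN : (j:ℕ) + 1 < N
    · rw [if_pos hjN]
      have hb : bN ((j:ℕ) + 1) (j:ℕ) = (η ((j:ℕ) + 1) - (((j:ℕ) + 1 : ℕ) : ℝ) - 2) / 2 := by
        simp only [hbN]
        rw [if_neg (by omega)]; simp
      rw [hb]
      simp only [hpN, wt, hη]
      rw [if_neg hj0', if_neg (by omega : ¬((j:ℕ) + 1 = 0))]
      push_cast
      linear_combination hk
    · rw [if_neg hjN, add_zero]
      have hjN' : (j:ℕ) + 1 = N := by have := j.isLt; omega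
      have hNR : ((j:ℕ) : ℝ) + 1 = (N : ℝ) := by exact_mod_cast congrArg (Nat.cast (R := ℝ)) hjN'
      have hN0 : (N : ℝ) ≠ 0 := by
        have : (0:ℝ) < N := by exact_mod_cast hN
        linarith
      have hzero : ((((N : ℝ) + 2) * ((((j:ℕ):ℝ)) + 1) ^ 2 / (N : ℝ) ^ 2 - ((((j:ℕ):ℝ)) + 1) - 2) / 2) = 0 := by
        rw [hNR]
        field_simp
        ring
      simp only [hpN, wt, hη]
      rw [if_neg hj0']
      push_cast
      linear_combination hk - uuP (l : ℕ) ((((j:ℕ):ℝ) + 1) ^ 2) * hzero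

/-- For the `N`-truncated unbounded whole-plane SLE_κ with
`κ = 2(N+2)/N²`, i.e. `ηₙ = (N+2)n²/N²`, the characteristic polynomial of `B`
equals `∏_{l=0}^{N-1} (X - β_l)` with
`β_l = (N + 2 - (2N² - 3N - 6)l + 2(N+2)l²)/N²`; that is, the eigenvalues of `B`
are precisely `β₀, …, β_{N-1}`. -/
theorem unbounded_truncated_SLE_spectrum (N : ℕ) (hN : 1 ≤ N) :
    (unboundedB N (fun n => ((N : ℝ) + 2) * (n : ℝ) ^ 2 / (N : ℝ) ^ 2)).charpoly
      = ∏ l : Fin N,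
          (X - C (((N : ℝ) + 2 - (2 * (N : ℝ) ^ 2 - 3 * N - 6) * (l : ℝ)
              + 2 * ((N : ℝ) + 2) * (l : ℝ) ^ 2) / (N : ℝ) ^ 2)) := by
  have hPB := PB_eq_TP N hN
  have hchar := charpoly_eq_of_conj (Pmat N) _ (Tmat N) (Pmat_det_ne_zero N) hPB
  rw [hchar, Tmat_charpoly]
  apply Finset.prod_congr rfl
  intro l _
  rfl
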